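/- arXiv:2012.06376 — 5 statements merged into one kernel-verified Lean document; each statement's English description precedes it below -/
import Mathlib

section
/- Let ψ : [0,∞) → [−1,1] be continuous and strictly decreasing with ψ(δ) = 0 for some δ > 0. Let η > 0, γ₀ ∈ [0,1], and ρ ∈ [0, δ). Let e : [0,∞) → [0,∞) be Lebesgue measurable with e(t) ≤ ρ for all t ≥ 0, and define γ(t) := min{1, γ₀ + η ∫₀ᵗ ψ(e(τ)) dτ}. Then ψ(ρ) > 0 and γ(t) = 1 for all t ≥ (1 − γ₀)/(η ψ(ρ)). -/
/-!
Since `0 ≤ e τ ≤ ρ < δ` and `ψ` is strictly decreasing, `ψ (e τ) ≥ ψ ρ > ψ δ = 0`. Hence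
`∫₀ᵗ ψ (e τ) dτ ≥ t ψ(ρ)`, and the unsaturated trust `γ₀ + η ∫₀ᵗ ψ (e τ) dτ` is at least
`γ₀ + η t ψ(ρ) ≥ 1` as soon as `t ≥ (1 - γ₀)/(η ψ(ρ))`.
-/

open Set MeasureTheory

theorem AntitoneOn.intervalIntegrable_comp {ψ e : ℝ → ℝ} {a b s t : ℝ}
    (hψ : AntitoneOn ψ (Icc a b)) (he : Measurable e)
    (hmem : ∀ τ ∈ uIcc s t, e τ ∈ Icc a b) :
    IntervalIntegrable (fun τ => ψ (e τ)) volume s t := by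
  have hab : a ≤ b := (hmem s left_mem_uIcc).1.trans (hmem s left_mem_uIcc).2
  -- `ψ ∘ projIcc` is a bounded antitone function on all of `ℝ`, hence Borel measurable.
  set g : ℝ → ℝ := fun x => ψ (projIcc a b hab x)
  have hg : Antitone g := fun x y hxy =>
    hψ (projIcc a b hab x).2 (projIcc a b hab y).2 (monotone_projIcc hab hxy)
  have hg_bound : ∀ x, ‖g x‖ ≤ max |ψ b| |ψ a| := fun x =>
    abs_le_max_abs_abs (hψ (projIcc a b hab x).2 (right_mem_Icc.2 hab) (projIcc a b hab x).2.2)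
      (hψ (left_mem_Icc.2 hab) (projIcc a b hab x).2 (projIcc a b hab x).2.1)
  have hge : IntervalIntegrable (fun τ => g (e τ)) volume s t :=
    intervalIntegrable_const.mono_fun' (hg.measurable.comp he).aestronglyMeasurable
      (Filter.Eventually.of_forall fun τ => hg_bound (e τ))
  refine (intervalIntegrable_congr fun τ hτ => ?_).2 hge
  simp [g, projIcc_of_mem hab (hmem τ (uIoc_subset_uIcc hτ))]

theorem mul_le_intervalIntegral_of_le {f : ℝ → ℝ} {a b c : ℝ} (hab : a ≤ b)
    (hf : IntervalIntegrable f volume a b) (h : ∀ x ∈ Icc a b, c ≤ f x) :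
    (b - a) * c ≤ ∫ x in a..b, f x := by
  simpa using intervalIntegral.integral_mono_on hab intervalIntegrable_const hf h

theorem statement_5_general (ψ : ℝ → ℝ)
    (hψanti : StrictAntiOn ψ (Set.Ici 0))
    (δ : ℝ) (hψδ : ψ δ = 0)
    (η : ℝ) (hη : 0 < η) (γ0 : ℝ) (hγ0 : γ0 ∈ Set.Icc (0 : ℝ) 1)
    (ρ : ℝ) (hρ : ρ ∈ Set.Ico 0 δ)
    (e : ℝ → ℝ) (he : Measurable e) (hebd : ∀ t ≥ (0 : ℝ), e t ∈ Set.Icc 0 ρ)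
    (γ : ℝ → ℝ)
    (hγ : ∀ t, γ t = min 1 (γ0 + η * ∫ τ in (0 : ℝ)..t, ψ (e τ))) :
    0 < ψ ρ ∧ ∀ t ≥ (1 - γ0) / (η * ψ ρ), γ t = 1 := by
  have hψρ : 0 < ψ ρ := hψδ ▸ hψanti hρ.1 (hρ.1.trans hρ.2.le) hρ.2
  refine ⟨hψρ, fun t ht => ?_⟩
  have hηψ : 0 < η * ψ ρ := mul_pos hη hψρ
  have ht0 : 0 ≤ t := (div_nonneg (sub_nonneg.2 hγ0.2) hηψ.le).trans ht
  have hψ_Icc : AntitoneOn ψ (Icc 0 ρ) := hψanti.antitoneOn.mono Icc_subset_Ici_self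
  have he_mem : ∀ τ ∈ Icc 0 t, e τ ∈ Icc 0 ρ := fun τ hτ => hebd τ hτ.1
  have hint : IntervalIntegrable (fun τ => ψ (e τ)) volume 0 t :=
    hψ_Icc.intervalIntegrable_comp he (by rwa [uIcc_of_le ht0])
  have hlower : t * ψ ρ ≤ ∫ τ in (0 : ℝ)..t, ψ (e τ) := by
    simpa using mul_le_intervalIntegral_of_le ht0 hint fun τ hτ =>
      hψ_Icc (he_mem τ hτ) (right_mem_Icc.2 hρ.1) (he_mem τ hτ).2
  have hsat : 1 ≤ γ0 + η * ∫ τ in (0 : ℝ)..t, ψ (e τ) :=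
    calc 1 ≤ γ0 + t * (η * ψ ρ) := by linarith [(div_le_iff₀ hηψ).mp ht]
      _ = γ0 + η * (t * ψ ρ) := by ring
      _ ≤ γ0 + η * ∫ τ in (0 : ℝ)..t, ψ (e τ) := by gcongr
  rw [hγ t, min_eq_left hsat]

/-- Trust dynamics: if the prediction error `e` stays below `ρ < δ`, then
`ψ ρ > 0` and the (saturated) trust variable
`γ(t) = min {1, γ₀ + η ∫₀ᵗ ψ(e τ) dτ}` reaches `1` by time `(1 − γ₀)/(η ψ(ρ))`. -/
theorem statement_5 (ψ : ℝ → ℝ) (hψcont : ContinuousOn ψ (Set.Ici 0))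
    (hψanti : StrictAntiOn ψ (Set.Ici 0))
    (hψrange : ∀ u ≥ (0 : ℝ), ψ u ∈ Set.Icc (-1 : ℝ) 1)
    (δ : ℝ) (hδ : 0 < δ) (hψδ : ψ δ = 0)
    (η : ℝ) (hη : 0 < η) (γ0 : ℝ) (hγ0 : γ0 ∈ Set.Icc (0 : ℝ) 1)
    (ρ : ℝ) (hρ : ρ ∈ Set.Ico 0 δ)
    (e : ℝ → ℝ) (he : Measurable e) (hebd : ∀ t ≥ (0 : ℝ), e t ∈ Set.Icc 0 ρ)
    (γ : ℝ → ℝ)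
    (hγ : ∀ t, γ t = min 1 (γ0 + η * ∫ τ in (0 : ℝ)..t, ψ (e τ))) :
    0 < ψ ρ ∧ ∀ t ≥ (1 - γ0) / (η * ψ ρ), γ t = 1 :=
  statement_5_general ψ hψanti δ hψδ η hη γ0 hγ0 ρ hρ e he hebd γ hγ
end

section
/- Let x* ∈ ℝ^n and let x' ∈ X* satisfy the variational inequality (x' − x*)ᵀ S⁻¹ (y − x') ≥ 0 for all y ∈ X*. Define p' := S⁻¹ (Σ_{i=1}^N c_i − x'). Then p' ∈ B and (Σ_{i=1}^N (c_i − Q_i⁻¹ p') − x*)ᵀ (p' − s) ≥ 0 for all s ∈ B. -/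
/-!
Since `∑ i (c i − Q i⁻¹ p) = ∑ i c i − S p`, the set `X*` is the image of `B` under the affine
bijection `p ↦ ∑ i c i − S p`, whose inverse is `x ↦ S⁻¹ (∑ i c i − x)`. Hence `p'` is the point
of `B` mapped to `x'`, and the variational inequality at the image `y` of `s ∈ B` reads
`⟨x' − x*, p' − s⟩ ≥ 0`.
-/

open scoped RealInnerProductSpace
open Matrix

noncomputable section

/-- The action of a real `n × n` matrix on Euclidean space. -/
def mvec {n : ℕ} (M : Matrix (Fin n) (Fin n) ℝ) (x : EuclideanSpace ℝ (Fin n)) :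
    EuclideanSpace ℝ (Fin n) :=
  Matrix.toEuclideanLin M x

section mvec

variable {n : ℕ}

lemma mvec_sub (A : Matrix (Fin n) (Fin n) ℝ) (x y : EuclideanSpace ℝ (Fin n)) :
    mvec A (x - y) = mvec A x - mvec A y :=
  map_sub _ x y

lemma mvec_sum_left {ι : Type*} (s : Finset ι) (M : ι → Matrix (Fin n) (Fin n) ℝ)
    (x : EuclideanSpace ℝ (Fin n)) : mvec (∑ i ∈ s, M i) x = ∑ i ∈ s, mvec (M i) x := by
  simp only [mvec, map_sum, LinearMap.sum_apply]

lemma mvec_nonsing_inv_cancel {A : Matrix (Fin n) (Fin n) ℝ} (hA : IsUnit A.det)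
    (x : EuclideanSpace ℝ (Fin n)) : mvec A⁻¹ (mvec A x) = x := by
  simp only [mvec, toLpLin_apply, mulVec_mulVec, nonsing_inv_mul A hA, one_mulVec,
    WithLp.toLp_ofLp]

lemma sum_sub_mvec {ι : Type*} (s : Finset ι) (c : ι → EuclideanSpace ℝ (Fin n))
    (M : ι → Matrix (Fin n) (Fin n) ℝ) (p : EuclideanSpace ℝ (Fin n)) :
    ∑ i ∈ s, (c i - mvec (M i) p) = ∑ i ∈ s, c i - mvec (∑ i ∈ s, M i) p := by
  rw [mvec_sum_left, Finset.sum_sub_distrib]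

end mvec

theorem statement_7_general (n N : ℕ) (hN : 0 < N)
    (Q : Fin N → Matrix (Fin n) (Fin n) ℝ) (hQ : ∀ i, (Q i).PosDef)
    (c : Fin N → EuclideanSpace ℝ (Fin n))
    (S : Matrix (Fin n) (Fin n) ℝ) (hS : S = ∑ i, (Q i)⁻¹)
    (B : Set (EuclideanSpace ℝ (Fin n)))
    (Xstar : Set (EuclideanSpace ℝ (Fin n)))
    (hXstar : Xstar = {x | ∃ phat ∈ B, x = ∑ i, (c i - mvec (Q i)⁻¹ phat)})
    (xstar : EuclideanSpace ℝ (Fin n))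
    (x' : EuclideanSpace ℝ (Fin n)) (hx' : x' ∈ Xstar)
    (hVI : ∀ y ∈ Xstar, 0 ≤ ⟪x' - xstar, mvec S⁻¹ (y - x')⟫)
    (p' : EuclideanSpace ℝ (Fin n))
    (hp' : p' = mvec S⁻¹ ((∑ i, c i) - x')) :
    p' ∈ B ∧ ∀ s ∈ B, 0 ≤ ⟪(∑ i, (c i - mvec (Q i)⁻¹ p')) - xstar, p' - s⟫ := by
  have hSdet : IsUnit S.det :=
    (hS ▸ posDef_sum (Finset.univ_nonempty_iff.mpr ⟨(⟨0, hN⟩ : Fin N)⟩) fun i _ => (hQ i).inv)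
      |>.det_pos.ne'.isUnit
  have hX : ∀ p, ∑ i, (c i - mvec (Q i)⁻¹ p) = ∑ i, c i - mvec S p := fun p => by
    rw [hS, sum_sub_mvec]
  subst hXstar
  obtain ⟨phat, hphat, rfl⟩ := hx'
  obtain rfl : p' = phat := by
    rw [hp', hX, sub_sub_cancel, mvec_nonsing_inv_cancel hSdet]
  refine ⟨hphat, fun s hs => ?_⟩
  have hVIs := hVI _ ⟨s, hs, rfl⟩
  rw [hX s, hX p', sub_sub_sub_cancel_left, ← mvec_sub, mvec_nonsing_inv_cancel hSdet] at hVIs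
  rwa [hX]

/-- If `x' ∈ X*` satisfies the variational inequality
`⟨x' − x*, S⁻¹ (y − x')⟩ ≥ 0` on `X*`, then `p' := S⁻¹ (∑ i c i − x')`
belongs to `B` and `⟨∑ i (c i − (Q i)⁻¹ p') − x*, p' − s⟩ ≥ 0` for all `s ∈ B`. -/
theorem statement_7 (n N : ℕ) (hn : 0 < n) (hN : 0 < N)
    (Q : Fin N → Matrix (Fin n) (Fin n) ℝ) (hQ : ∀ i, (Q i).PosDef)
    (c : Fin N → EuclideanSpace ℝ (Fin n))
    (S : Matrix (Fin n) (Fin n) ℝ) (hS : S = ∑ i, (Q i)⁻¹)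
    (p0 : EuclideanSpace ℝ (Fin n)) (δbar : ℝ) (hδ : 0 < δbar)
    (B : Set (EuclideanSpace ℝ (Fin n))) (hB : B = Metric.closedBall p0 δbar)
    (Xstar : Set (EuclideanSpace ℝ (Fin n)))
    (hXstar : Xstar = {x | ∃ phat ∈ B, x = ∑ i, (c i - mvec (Q i)⁻¹ phat)})
    (xstar : EuclideanSpace ℝ (Fin n))
    (x' : EuclideanSpace ℝ (Fin n)) (hx' : x' ∈ Xstar)
    (hVI : ∀ y ∈ Xstar, 0 ≤ ⟪x' - xstar, mvec S⁻¹ (y - x')⟫)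
    (p' : EuclideanSpace ℝ (Fin n))
    (hp' : p' = mvec S⁻¹ ((∑ i, c i) - x')) :
    p' ∈ B ∧ ∀ s ∈ B, 0 ≤ ⟪(∑ i, (c i - mvec (Q i)⁻¹ p')) - xstar, p' - s⟫ :=
  statement_7_general n N hN Q hQ c S hS B Xstar hXstar xstar x' hx' hVI p' hp'
end
end

section
/- Let ε > 0 and ν̄ > 0. Let p̂ ∈ ℝ^n, set d := p̂ − P_B(p̂), let γ_1,…,γ_N ∈ [0,1], and let ν ∈ ℝ^n with ‖ν‖ ≤ ν̄. If ‖d‖ ≥ 2εν̄, then ⟨d, −(ε⁻¹ I + Σ_{i=1}^N γ_i Q_i⁻¹) d + ν⟩ ≤ −(1/(2ε)) ‖d‖². -/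
/-!
The matrices `γ i • (Q i)⁻¹` are positive semidefinite, so their quadratic forms only help and
can be dropped. What remains is `-ε⁻¹ ‖d‖² + ⟪d, ν⟫`, and Cauchy–Schwarz together with
`2 ε ν̄ ≤ ‖d‖` bounds the perturbation by `‖d‖ ν̄ ≤ ‖d‖² / (2ε)`, half of the leading term.
-/

open scoped RealInnerProductSpace
open Matrix

noncomputable section

theorem real_inner_le_sq_div_of_two_mul_le {E : Type*} [NormedAddCommGroup E]
    [InnerProductSpace ℝ E] {ε νbar : ℝ} (hε : 0 < ε) {d ν : E} (hν : ‖ν‖ ≤ νbar)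
    (hd : 2 * ε * νbar ≤ ‖d‖) : ⟪d, ν⟫ ≤ 1 / (2 * ε) * ‖d‖ ^ 2 := by
  have hdν : ‖d‖ * νbar ≤ 1 / (2 * ε) * ‖d‖ ^ 2 := by
    rw [div_mul_eq_mul_div, one_mul, le_div_iff₀ (by positivity)]
    nlinarith [mul_le_mul_of_nonneg_left hd (norm_nonneg d)]
  calc ⟪d, ν⟫ ≤ ‖d‖ * ‖ν‖ := real_inner_le_norm d ν
    _ ≤ ‖d‖ * νbar := mul_le_mul_of_nonneg_left hν (norm_nonneg d)
    _ ≤ 1 / (2 * ε) * ‖d‖ ^ 2 := hdν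

theorem real_inner_neg_inv_smul_add_add_le {E : Type*} [NormedAddCommGroup E]
    [InnerProductSpace ℝ E] {ε νbar : ℝ} (hε : 0 < ε) {d w ν : E} (hw : 0 ≤ ⟪d, w⟫)
    (hν : ‖ν‖ ≤ νbar) (hd : 2 * ε * νbar ≤ ‖d‖) :
    ⟪d, -(ε⁻¹ • d + w) + ν⟫ ≤ -(1 / (2 * ε)) * ‖d‖ ^ 2 := by
  have hdν := real_inner_le_sq_div_of_two_mul_le hε hν hd
  have hε' : ε⁻¹ = 2 * (1 / (2 * ε)) := by field_simp
  rw [inner_add_right, inner_neg_right, inner_add_right, real_inner_smul_right,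
    real_inner_self_eq_norm_sq, hε']
  linarith

theorem mvec_smul_one_add {n : ℕ} (c : ℝ) (M : Matrix (Fin n) (Fin n) ℝ)
    (x : EuclideanSpace ℝ (Fin n)) : mvec (c • 1 + M) x = c • x + mvec M x := by
  simp [mvec]

theorem Matrix.PosSemidef.inner_mvec_nonneg {n : ℕ} {M : Matrix (Fin n) (Fin n) ℝ}
    (hM : M.PosSemidef) (x : EuclideanSpace ℝ (Fin n)) : 0 ≤ ⟪x, mvec M x⟫ :=
  (isPositive_toEuclideanLin_iff.mpr hM).inner_nonneg_right x

theorem posSemidef_sum_smul_inv {ι m : Type*} [Fintype ι] [Fintype m] [DecidableEq m]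
    {Q : ι → Matrix m m ℝ} (hQ : ∀ i, (Q i).PosSemidef) {γ : ι → ℝ} (hγ : ∀ i, 0 ≤ γ i) :
    (∑ i, γ i • (Q i)⁻¹).PosSemidef :=
  posSemidef_sum _ fun i _ => (hQ i).inv.smul (hγ i)

theorem statement_10_general (n N : ℕ)
    (Q : Fin N → Matrix (Fin n) (Fin n) ℝ) (hQ : ∀ i, (Q i).PosDef)
    (ε νbar : ℝ) (hε : 0 < ε)
    (d : EuclideanSpace ℝ (Fin n))
    (γ : Fin N → ℝ) (hγ : ∀ i, γ i ∈ Set.Icc (0 : ℝ) 1)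
    (ν : EuclideanSpace ℝ (Fin n)) (hν : ‖ν‖ ≤ νbar)
    (hdbig : 2 * ε * νbar ≤ ‖d‖) :
    ⟪d, -mvec (ε⁻¹ • (1 : Matrix (Fin n) (Fin n) ℝ) + ∑ i, γ i • (Q i)⁻¹) d + ν⟫ ≤
      -(1 / (2 * ε)) * ‖d‖ ^ 2 := by
  have hS := posSemidef_sum_smul_inv (fun i => (hQ i).posSemidef) (fun i => (hγ i).1)
  rw [mvec_smul_one_add]
  exact real_inner_neg_inv_smul_add_add_le hε (hS.inner_mvec_nonneg d) hν hdbig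

/-- If `d = p̂ − P_B(p̂)` satisfies `‖d‖ ≥ 2 ε ν̄`, then
`⟨d, −(ε⁻¹ I + ∑ γ_i (Q i)⁻¹) d + ν⟩ ≤ −(1/(2ε)) ‖d‖²` whenever `‖ν‖ ≤ ν̄`
and every `γ_i ∈ [0,1]`. -/
theorem statement_10 (n N : ℕ) (hn : 0 < n) (hN : 0 < N)
    (Q : Fin N → Matrix (Fin n) (Fin n) ℝ) (hQ : ∀ i, (Q i).PosDef)
    (p0 : EuclideanSpace ℝ (Fin n)) (δbar : ℝ) (hδ : 0 < δbar)
    (B : Set (EuclideanSpace ℝ (Fin n))) (hB : B = Metric.closedBall p0 δbar)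
    (P : EuclideanSpace ℝ (Fin n) → EuclideanSpace ℝ (Fin n))
    (hP : ∀ x, P x ∈ B ∧ ∀ y ∈ B, ‖x - P x‖ ≤ ‖x - y‖)
    (ε νbar : ℝ) (hε : 0 < ε) (hνbar : 0 < νbar)
    (phat : EuclideanSpace ℝ (Fin n))
    (d : EuclideanSpace ℝ (Fin n)) (hd : d = phat - P phat)
    (γ : Fin N → ℝ) (hγ : ∀ i, γ i ∈ Set.Icc (0 : ℝ) 1)
    (ν : EuclideanSpace ℝ (Fin n)) (hν : ‖ν‖ ≤ νbar)
    (hdbig : 2 * ε * νbar ≤ ‖d‖) :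
    ⟪d, -mvec (ε⁻¹ • (1 : Matrix (Fin n) (Fin n) ℝ) + ∑ i, γ i • (Q i)⁻¹) d + ν⟫ ≤
      -(1 / (2 * ε)) * ‖d‖ ^ 2 :=
  statement_10_general n N Q hQ ε νbar hε d γ hγ ν hν hdbig
end
end

section
/- Let p* ∈ B, let ε > 0, and let p : [0,∞) → ℝ^n be differentiable with derivative p'(t) = −S (p(t) − p*) + ε⁻¹ (P_B(p(t)) − p(t)) for all t ≥ 0. Then ‖p(t) − p*‖ ≤ e^{−λt} ‖p(0) − p*‖ for all t ≥ 0, where λ := λ_min(S) > 0 is the smallest eigenvalue of S; in particular p(t) converges to p* as t → ∞. -/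
open scoped RealInnerProductSpace
open Matrix

noncomputable section

/-! Put `v = p - p*`. Since `p* ∈ B`, the variational inequality of the projection gives
`⟪P_B(p) - p, p - p*⟫ ≤ 0`, and expanding in an orthonormal eigenbasis of `S` gives
`⟪S v, v⟫ ≥ λ ‖v‖²`; together `⟪v, v'⟫ ≤ -λ ‖v‖²`. Hence the velocity of the curve
`e^{λt} v(t)` makes a nonpositive inner product with its position, so its norm is
nonincreasing. -/

open Filter Topology

section InnerProductSpace

variable {E : Type*} [NormedAddCommGroup E] [InnerProductSpace ℝ E]

theorem real_inner_nearest_sub_sub_le_zero {K : Set E} (hK : Convex ℝ K) {x z y : E}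
    (hz : z ∈ K) (hmin : ∀ w ∈ K, ‖x - z‖ ≤ ‖x - w‖) (hy : y ∈ K) :
    ⟪z - x, x - y⟫ ≤ 0 := by
  have : Nonempty K := ⟨⟨z, hz⟩⟩
  have hbdd : BddBelow (Set.range fun w : K => ‖x - w‖) :=
    ⟨0, Set.forall_mem_range.2 fun _ => norm_nonneg _⟩
  have hinf : ‖x - z‖ = ⨅ w : K, ‖x - w‖ :=
    le_antisymm (le_ciInf fun w => hmin w w.2) (ciInf_le hbdd ⟨z, hz⟩)
  have hvar : ⟪x - z, y - z⟫ ≤ 0 := (norm_eq_iInf_iff_real_inner_le_zero hK hz).mp hinf y hy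
  have hsplit : ⟪z - x, x - y⟫ = ⟪x - z, y - z⟫ - ‖x - z‖ ^ 2 := by
    rw [← real_inner_self_eq_norm_sq, ← inner_sub_right, ← neg_sub x z, inner_neg_left,
      ← inner_neg_right]
    congr 1
    abel
  rw [hsplit]
  linarith [sq_nonneg ‖x - z‖]

theorem LinearMap.IsSymmetric.mul_norm_sq_le_inner_of_eigenbasis {ι : Type*} [Fintype ι]
    {T : E →ₗ[ℝ] E} (hT : T.IsSymmetric) (b : OrthonormalBasis ι ℝ E) {μ : ι → ℝ}
    (hb : ∀ i, T (b i) = μ i • b i) {c : ℝ} (hc : ∀ i, c ≤ μ i) (v : E) :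
    c * ‖v‖ ^ 2 ≤ ⟪T v, v⟫ := by
  have hTv : ∀ i, ⟪T v, b i⟫ = μ i * ⟪b i, v⟫ := fun i => by
    rw [hT, hb, real_inner_smul_right, real_inner_comm]
  rw [← b.sum_sq_inner_right, ← b.sum_inner_mul_inner, Finset.mul_sum]
  refine Finset.sum_le_sum fun i _ => ?_
  rw [hTv, mul_assoc, ← sq]
  exact mul_le_mul_of_nonneg_right (hc i) (sq_nonneg _)

theorem antitoneOn_norm_of_inner_deriv_nonpos {w w' : ℝ → E}
    (hw : ∀ t ≥ 0, HasDerivAt w (w' t) t) (hdiss : ∀ t ≥ 0, ⟪w t, w' t⟫ ≤ 0) :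
    AntitoneOn (fun t => ‖w t‖) (Set.Ici 0) := by
  have hsq : AntitoneOn (fun t => ‖w t‖ ^ 2) (Set.Ici 0) := by
    refine antitoneOn_of_hasDerivWithinAt_nonpos (f' := fun t => 2 * ⟪w t, w' t⟫) (convex_Ici 0)
      (fun t ht => (hw t ht).norm_sq.continuousAt.continuousWithinAt)
      (fun t ht => ?_) (fun t ht => ?_)
    all_goals rw [interior_Ici] at ht
    · exact (hw t (le_of_lt ht)).norm_sq.hasDerivWithinAt
    · exact mul_nonpos_of_nonneg_of_nonpos zero_le_two (hdiss t (le_of_lt ht))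
  exact fun s hs t ht hst =>
    (pow_le_pow_iff_left₀ (norm_nonneg _) (norm_nonneg _) two_ne_zero).mp (hsq hs ht hst)

theorem norm_le_exp_mul_norm_of_inner_deriv_le {v v' : ℝ → E} {c : ℝ}
    (hv : ∀ t ≥ 0, HasDerivAt v (v' t) t) (hdiss : ∀ t ≥ 0, ⟪v t, v' t⟫ ≤ -c * ‖v t‖ ^ 2)
    {t : ℝ} (ht : 0 ≤ t) :
    ‖v t‖ ≤ Real.exp (-c * t) * ‖v 0‖ := by
  have hw : ∀ t ≥ 0, HasDerivAt (fun s => Real.exp (c * s) • v s)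
      (Real.exp (c * t) • v' t + (Real.exp (c * t) * c) • v t) t := fun t ht => by
    simpa using ((hasDerivAt_id t).const_mul c).exp.fun_smul (hv t ht)
  have hanti := antitoneOn_norm_of_inner_deriv_nonpos hw fun t ht => by
    rw [inner_add_right, real_inner_smul_left, real_inner_smul_right, real_inner_smul_left,
      real_inner_smul_right, real_inner_self_eq_norm_sq]
    nlinarith [mul_le_mul_of_nonneg_left (hdiss t ht) (sq_nonneg (Real.exp (c * t)))]
  have h := hanti Set.self_mem_Ici ht ht
  simp only [norm_smul, Real.norm_eq_abs, abs_of_pos (Real.exp_pos _), mul_zero, Real.exp_zero,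
    abs_one, one_mul] at h
  rw [neg_mul, Real.exp_neg, ← div_eq_inv_mul, le_div_iff₀' (Real.exp_pos _)]
  exact h

end InnerProductSpace

theorem tendsto_of_norm_sub_le_exp_mul {E : Type*} [SeminormedAddCommGroup E] {f : ℝ → E} {a : E}
    {c C : ℝ} (hc : 0 < c) (h : ∀ t ≥ 0, ‖f t - a‖ ≤ Real.exp (-c * t) * C) :
    Tendsto f atTop (𝓝 a) := by
  rw [tendsto_iff_norm_sub_tendsto_zero]
  have hexp : Tendsto (fun t => Real.exp (-c * t) * C) atTop (𝓝 0) := by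
    simpa using (Real.tendsto_exp_atBot.comp
      (tendsto_id.const_mul_atTop_of_neg (neg_neg_of_pos hc))).mul_const C
  exact squeeze_zero' (Eventually.of_forall fun t => norm_nonneg _)
    (eventually_atTop.2 ⟨0, h⟩) hexp

namespace Matrix

variable {ι : Type*} [Fintype ι] [DecidableEq ι]

theorem IsHermitian.mul_norm_sq_le_inner_toEuclideanLin {A : Matrix ι ι ℝ} (hA : A.IsHermitian)
    {c : ℝ} (hc : ∀ i, c ≤ hA.eigenvalues i) (v : EuclideanSpace ℝ ι) :
    c * ‖v‖ ^ 2 ≤ ⟪toEuclideanLin A v, v⟫ :=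
  (isSymmetric_toEuclideanLin_iff.mpr hA).mul_norm_sq_le_inner_of_eigenbasis hA.eigenvectorBasis
    (fun i => by ext j; simpa using congrFun (hA.mulVec_eigenvectorBasis i) j) hc v

theorem PosDef.iInf_eigenvalues_pos [Nonempty ι] {A : Matrix ι ι ℝ} (hA : A.PosDef) :
    0 < ⨅ i, hA.isHermitian.eigenvalues i := by
  obtain ⟨i, hi⟩ := exists_eq_ciInf_of_finite (f := hA.isHermitian.eigenvalues)
  exact hi ▸ hA.eigenvalues_pos i

end Matrix

theorem statement_11_general (n N : ℕ) (hn : 0 < n) (hN : 0 < N)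
    (Q : Fin N → Matrix (Fin n) (Fin n) ℝ) (hQ : ∀ i, (Q i).PosDef)
    (S : Matrix (Fin n) (Fin n) ℝ) (hS : S = ∑ i, (Q i)⁻¹) (hSH : S.IsHermitian)
    (p0 : EuclideanSpace ℝ (Fin n)) (δbar : ℝ)
    (B : Set (EuclideanSpace ℝ (Fin n))) (hB : B = Metric.closedBall p0 δbar)
    (P : EuclideanSpace ℝ (Fin n) → EuclideanSpace ℝ (Fin n))
    (hP : ∀ x, P x ∈ B ∧ ∀ y ∈ B, ‖x - P x‖ ≤ ‖x - y‖)
    (pstar : EuclideanSpace ℝ (Fin n)) (hpstar : pstar ∈ B)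
    (ε : ℝ) (hε : 0 < ε)
    (p : ℝ → EuclideanSpace ℝ (Fin n))
    (hp : ∀ t ≥ (0 : ℝ),
      HasDerivAt p (-mvec S (p t - pstar) + ε⁻¹ • (P (p t) - p t)) t)
    (lam : ℝ) (hlam : lam = ⨅ i, hSH.eigenvalues i) :
    0 < lam ∧
      (∀ t ≥ (0 : ℝ), ‖p t - pstar‖ ≤ Real.exp (-lam * t) * ‖p 0 - pstar‖) ∧
      Filter.Tendsto p Filter.atTop (nhds pstar) := by
  have : Nonempty (Fin n) := ⟨⟨0, hn⟩⟩
  have hSpd : S.PosDef := hS ▸ posDef_sum ⟨⟨0, hN⟩, Finset.mem_univ _⟩ fun i _ => (hQ i).inv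
  have hlam_pos : 0 < lam := hlam ▸ hSpd.iInf_eigenvalues_pos
  have hquad : ∀ v, lam * ‖v‖ ^ 2 ≤ ⟪mvec S v, v⟫ :=
    hSH.mul_norm_sq_le_inner_toEuclideanLin fun i =>
      hlam ▸ ciInf_le (Set.finite_range _).bddBelow i
  have hproj : ∀ x, ⟪P x - x, x - pstar⟫ ≤ 0 := fun x =>
    real_inner_nearest_sub_sub_le_zero (hB ▸ convex_closedBall p0 δbar) (hP x).1 (hP x).2 hpstar
  have hdiss : ∀ t ≥ (0 : ℝ), ⟪p t - pstar, -mvec S (p t - pstar) + ε⁻¹ • (P (p t) - p t)⟫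
      ≤ -lam * ‖p t - pstar‖ ^ 2 := fun t _ => by
    have hS_coercive := hquad (p t - pstar)
    have hP_inward := mul_nonpos_of_nonneg_of_nonpos (inv_pos.2 hε).le (hproj (p t))
    rw [real_inner_comm] at hS_coercive hP_inward
    rw [inner_add_right, inner_neg_right, real_inner_smul_right]
    linarith
  have hdecay : ∀ t ≥ (0 : ℝ), ‖p t - pstar‖ ≤ Real.exp (-lam * t) * ‖p 0 - pstar‖ :=
    fun t ht => norm_le_exp_mul_norm_of_inner_deriv_le (fun s hs => (hp s hs).sub_const pstar)
      hdiss ht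
  exact ⟨hlam_pos, hdecay, tendsto_of_norm_sub_le_exp_mul hlam_pos hdecay⟩

/-- Solutions of `p' = −S (p − p*) + ε⁻¹ (P_B(p) − p)` with `p* ∈ B` satisfy
`‖p(t) − p*‖ ≤ e^{−λ t} ‖p(0) − p*‖` with `λ = λ_min(S) > 0`; in particular
`p(t) → p*`. -/
theorem statement_11 (n N : ℕ) (hn : 0 < n) (hN : 0 < N)
    (Q : Fin N → Matrix (Fin n) (Fin n) ℝ) (hQ : ∀ i, (Q i).PosDef)
    (S : Matrix (Fin n) (Fin n) ℝ) (hS : S = ∑ i, (Q i)⁻¹) (hSH : S.IsHermitian)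
    (p0 : EuclideanSpace ℝ (Fin n)) (δbar : ℝ) (hδ : 0 < δbar)
    (B : Set (EuclideanSpace ℝ (Fin n))) (hB : B = Metric.closedBall p0 δbar)
    (P : EuclideanSpace ℝ (Fin n) → EuclideanSpace ℝ (Fin n))
    (hP : ∀ x, P x ∈ B ∧ ∀ y ∈ B, ‖x - P x‖ ≤ ‖x - y‖)
    (pstar : EuclideanSpace ℝ (Fin n)) (hpstar : pstar ∈ B)
    (ε : ℝ) (hε : 0 < ε)
    (p : ℝ → EuclideanSpace ℝ (Fin n))
    (hp : ∀ t ≥ (0 : ℝ),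
      HasDerivAt p (-mvec S (p t - pstar) + ε⁻¹ • (P (p t) - p t)) t)
    (lam : ℝ) (hlam : lam = ⨅ i, hSH.eigenvalues i) :
    0 < lam ∧
      (∀ t ≥ (0 : ℝ), ‖p t - pstar‖ ≤ Real.exp (-lam * t) * ‖p 0 - pstar‖) ∧
      Filter.Tendsto p Filter.atTop (nhds pstar) :=
  statement_11_general n N hn hN Q hQ S hS hSH p0 δbar B hB P hP pstar hpstar ε hε p hp lam hlam
end
end

section
/- Let Q be a symmetric positive definite real n×n matrix, let σ > 0, and let k₀ ≥ √n λ_max(Q)/λ_min(Q)². Then for every real n×n matrix K, σ_s(‖K‖_F) · Tr(Kᵀ Q⁻¹ (K + Q⁻¹)) ≥ 0. -/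
open Matrix

noncomputable section

/-- The saturation function `σ_s` of the adaptive nudge mechanism. -/
def sigs (σ k0 u : ℝ) : ℝ :=
  if u < k0 then 0 else if u ≤ 2 * k0 then σ * (u / k0 - 1) else σ

/-- The Frobenius norm `‖M‖_F = √(Tr (Mᵀ M))` of a real matrix. -/
def frob {n : ℕ} (M : Matrix (Fin n) (Fin n) ℝ) : ℝ :=
  Real.sqrt ((Mᵀ * M).trace)

/-!
Below the threshold `‖K‖_F < k₀` the factor `σ_s` vanishes and above it `σ_s ≥ 0`, so it suffices
to show that the trace is nonnegative once `‖K‖_F ≥ √n λ_max / λ_min²`. Diagonalising `Q` gives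
`Q⁻¹ ≥ λ_max⁻¹ I`, hence `Tr(Kᵀ Q⁻¹ K) ≥ ‖K‖_F² / λ_max`, while Cauchy–Schwarz for the Frobenius
inner product together with `‖Q⁻²‖_F ≤ √n / λ_min²` bounds the cross term `Tr(Kᵀ Q⁻²)` below by
`-‖K‖_F √n / λ_min²`, which the first term dominates above the threshold.
-/

open Unitary

lemma sigs_mul_nonneg {σ k0 u x : ℝ} (hσ : 0 ≤ σ) (hk0 : 0 < k0) (hx : k0 ≤ u → 0 ≤ x) :
    0 ≤ sigs σ k0 u * x := by
  unfold sigs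
  split_ifs with hlt
  · rw [zero_mul]
  · have : 1 ≤ u / k0 := (one_le_div hk0).mpr (not_lt.mp hlt)
    exact mul_nonneg (mul_nonneg hσ (by linarith)) (hx (not_lt.mp hlt))
  · exact mul_nonneg hσ (hx (not_lt.mp hlt))

namespace Matrix

variable {ι κ : Type*} [Fintype ι] [Fintype κ]

lemma trace_transpose_mul_eq_sum (A B : Matrix ι κ ℝ) :
    (Aᵀ * B).trace = ∑ p : ι × κ, A p.1 p.2 * B p.1 p.2 := by
  rw [Fintype.sum_prod_type, Finset.sum_comm]
  simp [trace, mul_apply]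

lemma mul_trace_transpose_mul_self_le [DecidableEq ι] {A : Matrix ι ι ℝ} {c : ℝ}
    (hA : (A - c • 1).PosSemidef) (K : Matrix ι κ ℝ) :
    c * (Kᵀ * K).trace ≤ (Kᵀ * A * K).trace := by
  have := (hA.conjTranspose_mul_mul_same K).trace_nonneg
  rw [conjTranspose_eq_transpose_of_trivial, Matrix.mul_sub, Matrix.sub_mul, trace_sub,
    Matrix.mul_smul, Matrix.smul_mul, Matrix.mul_one, trace_smul, smul_eq_mul] at this
  linarith

variable [DecidableEq ι]

lemma trace_conjStarAlgAut (U : unitary (Matrix ι ι ℝ)) (A : Matrix ι ι ℝ) :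
    (conjStarAlgAut ℝ _ U A).trace = A.trace := by
  rw [conjStarAlgAut_apply, trace_mul_cycle, coe_star_mul_self, one_mul]

lemma PosSemidef.conjStarAlgAut {A : Matrix ι ι ℝ} (hA : A.PosSemidef)
    (U : unitary (Matrix ι ι ℝ)) : (conjStarAlgAut ℝ _ U A).PosSemidef := by
  simpa [star_eq_conjTranspose] using hA.mul_mul_conjTranspose_same (U : Matrix ι ι ℝ)

lemma PosDef.inv_eq_conjStarAlgAut {Q : Matrix ι ι ℝ} (hQ : Q.PosDef) :
    Q⁻¹ = conjStarAlgAut ℝ _ hQ.1.eigenvectorUnitary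
      (diagonal fun i => (hQ.1.eigenvalues i)⁻¹) := by
  refine inv_eq_right_inv ?_
  nth_rewrite 1 [hQ.1.spectral_theorem]
  rw [← map_mul, diagonal_mul_diagonal]
  convert map_one (conjStarAlgAut ℝ _ hQ.1.eigenvectorUnitary)
  rw [← diagonal_one]
  congr 1
  ext i
  simp [(hQ.eigenvalues_pos i).ne']

lemma PosDef.posSemidef_inv_sub_smul_one {Q : Matrix ι ι ℝ} (hQ : Q.PosDef) {M : ℝ}
    (hM : ∀ i, hQ.1.eigenvalues i ≤ M) : (Q⁻¹ - M⁻¹ • 1).PosSemidef := by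
  have hconj : Q⁻¹ - M⁻¹ • 1 = conjStarAlgAut ℝ _ hQ.1.eigenvectorUnitary
      (diagonal fun i => (hQ.1.eigenvalues i)⁻¹ - M⁻¹) := by
    rw [hQ.inv_eq_conjStarAlgAut, ← diagonal_sub, ← smul_one_eq_diagonal, map_sub, map_smul,
      map_one]
  rw [hconj]
  refine PosSemidef.conjStarAlgAut (posSemidef_diagonal_iff.mpr fun i => ?_) _
  exact sub_nonneg.mpr (inv_anti₀ (hQ.eigenvalues_pos i) (hM i))

end Matrix

lemma frob_nonneg {n : ℕ} (A : Matrix (Fin n) (Fin n) ℝ) : 0 ≤ frob A :=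
  Real.sqrt_nonneg _

lemma frob_eq_sqrt_sum {n : ℕ} (A : Matrix (Fin n) (Fin n) ℝ) :
    frob A = √(∑ p : Fin n × Fin n, A p.1 p.2 ^ 2) := by
  simp only [frob, trace_transpose_mul_eq_sum, sq]

lemma sq_frob {n : ℕ} (A : Matrix (Fin n) (Fin n) ℝ) : frob A ^ 2 = (Aᵀ * A).trace :=
  Real.sq_sqrt <| by simpa using (posSemidef_conjTranspose_mul_self A).trace_nonneg

lemma abs_trace_transpose_mul_le {n : ℕ} (A B : Matrix (Fin n) (Fin n) ℝ) :
    |(Aᵀ * B).trace| ≤ frob A * frob B := by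
  rw [frob_eq_sqrt_sum, frob_eq_sqrt_sum, ← Real.sqrt_mul (by positivity),
    trace_transpose_mul_eq_sum]
  exact Real.abs_le_sqrt (Finset.sum_mul_sq_le_sq_mul_sq _ _ _)

lemma frob_conjStarAlgAut {n : ℕ} (U : unitary (Matrix (Fin n) (Fin n) ℝ))
    (A : Matrix (Fin n) (Fin n) ℝ) : frob (conjStarAlgAut ℝ _ U A) = frob A := by
  have htranspose : ∀ M : Matrix (Fin n) (Fin n) ℝ, Mᵀ = star M := fun M => by
    rw [star_eq_conjTranspose, conjTranspose_eq_transpose_of_trivial]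
  rw [frob, frob, htranspose, ← map_star, ← map_mul, trace_conjStarAlgAut, ← htranspose]

lemma frob_diagonal {n : ℕ} (f : Fin n → ℝ) : frob (diagonal f) = √(∑ i, f i ^ 2) := by
  simp only [frob, diagonal_transpose, diagonal_mul_diagonal, trace_diagonal, sq]

lemma Matrix.PosDef.frob_inv_mul_inv_le {n : ℕ} {Q : Matrix (Fin n) (Fin n) ℝ} (hQ : Q.PosDef)
    {m : ℝ} (hm : 0 < m) (hmQ : ∀ i, m ≤ hQ.1.eigenvalues i) :
    frob (Q⁻¹ * Q⁻¹) ≤ √n / m ^ 2 := by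
  rw [hQ.inv_eq_conjStarAlgAut, ← map_mul, frob_conjStarAlgAut, diagonal_mul_diagonal,
    frob_diagonal]
  calc √(∑ i, ((hQ.1.eigenvalues i)⁻¹ * (hQ.1.eigenvalues i)⁻¹) ^ 2)
      ≤ √(∑ _i : Fin n, ((m ^ 2)⁻¹) ^ 2) := by
        refine Real.sqrt_le_sqrt (Finset.sum_le_sum fun i _ => ?_)
        have := hQ.eigenvalues_pos i
        rw [← mul_inv, ← sq]
        gcongr
        exact hmQ i
    _ = √n / m ^ 2 := by
        rw [Finset.sum_const, Finset.card_univ, Fintype.card_fin, nsmul_eq_mul,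
          Real.sqrt_mul n.cast_nonneg, Real.sqrt_sq (by positivity), div_eq_mul_inv]

lemma Matrix.PosDef.trace_transpose_mul_inv_mul_add_inv_nonneg {n : ℕ}
    {Q : Matrix (Fin n) (Fin n) ℝ} (hQ : Q.PosDef) {m M : ℝ} (hm : 0 < m) (hM : 0 < M)
    (hmQ : ∀ i, m ≤ hQ.1.eigenvalues i) (hMQ : ∀ i, hQ.1.eigenvalues i ≤ M)
    {K : Matrix (Fin n) (Fin n) ℝ} (hK : √n * M / m ^ 2 ≤ frob K) :
    0 ≤ (Kᵀ * Q⁻¹ * (K + Q⁻¹)).trace := by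
  have hquad : M⁻¹ * frob K ^ 2 ≤ (Kᵀ * Q⁻¹ * K).trace := by
    simpa [sq_frob] using mul_trace_transpose_mul_self_le (hQ.posSemidef_inv_sub_smul_one hMQ) K
  have hcross : -(frob K * (√n / m ^ 2)) ≤ (Kᵀ * (Q⁻¹ * Q⁻¹)).trace := by
    refine le_trans (neg_le_neg ?_) (neg_abs_le _)
    exact (abs_trace_transpose_mul_le _ _).trans
      (mul_le_mul_of_nonneg_left (hQ.frob_inv_mul_inv_le hm hmQ) (frob_nonneg K))
  have hratio : √n / m ^ 2 ≤ frob K / M := by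
    rw [le_div_iff₀ hM]
    calc √n / m ^ 2 * M = √n * M / m ^ 2 := by ring
      _ ≤ frob K := hK
  have hdom : frob K * (√n / m ^ 2) ≤ M⁻¹ * frob K ^ 2 :=
    calc frob K * (√n / m ^ 2) ≤ frob K * (frob K / M) :=
          mul_le_mul_of_nonneg_left hratio (frob_nonneg K)
      _ = M⁻¹ * frob K ^ 2 := by ring
  rw [Matrix.mul_add, trace_add, Matrix.mul_assoc Kᵀ Q⁻¹ Q⁻¹]
  linarith

/-- If `k₀ ≥ √n λ_max(Q)/λ_min(Q)²`, then for every matrix `K`,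
`σ_s(‖K‖_F) · Tr(Kᵀ Q⁻¹ (K + Q⁻¹)) ≥ 0`. -/
theorem statement_12 (n : ℕ) (hn : 0 < n)
    (Q : Matrix (Fin n) (Fin n) ℝ) (hQ : Q.PosDef)
    (σ k0 : ℝ) (hσ : 0 < σ)
    (lammax lammin : ℝ)
    (hmax : lammax = ⨆ i, hQ.1.eigenvalues i)
    (hmin : lammin = ⨅ i, hQ.1.eigenvalues i)
    (hk0 : Real.sqrt n * lammax / lammin ^ 2 ≤ k0) :
    ∀ K : Matrix (Fin n) (Fin n) ℝ,
      0 ≤ sigs σ k0 (frob K) * (Kᵀ * Q⁻¹ * (K + Q⁻¹)).trace := by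
  intro K
  have : Nonempty (Fin n) := ⟨⟨0, hn⟩⟩
  have hle_max : ∀ i, hQ.1.eigenvalues i ≤ lammax :=
    fun i => hmax ▸ le_ciSup (Finite.bddAbove_range _) i
  have hmin_le : ∀ i, lammin ≤ hQ.1.eigenvalues i :=
    fun i => hmin ▸ ciInf_le (Finite.bddBelow_range _) i
  have hmin_pos : 0 < lammin := by
    obtain ⟨i, hi⟩ := exists_eq_ciInf_of_finite (f := hQ.1.eigenvalues)
    exact hmin ▸ hi ▸ hQ.eigenvalues_pos i
  have hmax_pos : 0 < lammax := (hQ.eigenvalues_pos ⟨0, hn⟩).trans_le (hle_max _)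
  have hk0_pos : 0 < k0 := lt_of_lt_of_le (by positivity) hk0
  exact sigs_mul_nonneg hσ.le hk0_pos fun hK =>
    hQ.trace_transpose_mul_inv_mul_add_inv_nonneg hmin_pos hmax_pos hmin_le hle_max (hk0.trans hK)
end
end
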